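/- arXiv:1707.00495 — 4 statements merged into one kernel-verified Lean document; each statement's English description precedes it below -/
import Mathlib

section
/- For every σ ∈ S_3 and every even polynomial p ∈ ℚ[x,y,z]^even, one has σ_*(φ(p)) = φ(σ.p); that is, φ restricted to even polynomials is equivariant for the signed S_3-action on ℚ[x,y,z] and the action σ_* on ℚ[x,y]. -/
open MvPolynomial

noncomputable section

/-- The signed action of `S₃` on `ℚ[x,y,z]`:
`σ.(x^{k₁}y^{k₂}z^{k₃}) = sgn(σ) · x^{k_{σ(1)}}y^{k_{σ(2)}}z^{k_{σ(3)}}`. -/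
def act3 (σ : Equiv.Perm (Fin 3)) (p : MvPolynomial (Fin 3) ℚ) : MvPolynomial (Fin 3) ℚ :=
  (Equiv.Perm.sign σ : ℤ) • rename (⇑σ⁻¹) p

/-- The algebra map `φ : ℚ[x,y,z] → ℚ[x,y]`, `x ↦ x`, `y ↦ y`, `z ↦ -x-y`. -/
def phi : MvPolynomial (Fin 3) ℚ →ₐ[ℚ] MvPolynomial (Fin 2) ℚ :=
  aeval ![X 0, X 1, - X 0 - X 1]

/-- The subspace of even polynomials. -/
def evenSub (n : ℕ) : Submodule ℚ (MvPolynomial (Fin n) ℚ) where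
  carrier := {p | ∀ d ∈ p.support, Even (d.sum fun _ e => e)}
  add_mem' := by
    intro p q hp hq d hd
    rcases Finset.mem_union.mp (support_add hd) with h | h
    · exact hp d h
    · exact hq d h
  zero_mem' := by simp
  smul_mem' := by
    intro c p hp d hd
    exact hp d (support_smul hd)

/-- The map `σ_* : ℚ[x,y] → ℚ[x,y]` defined by `σ_*(x^{k₁}y^{k₂}) = φ(σ.(x^{k₁}y^{k₂}z⁰))`,
extended linearly. -/
def star3 (σ : Equiv.Perm (Fin 3)) (p : MvPolynomial (Fin 2) ℚ) : MvPolynomial (Fin 2) ℚ :=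
  phi (act3 σ (rename (Fin.castSucc : Fin 2 → Fin 3) p))


lemma sumw (τ : Equiv.Perm (Fin 3)) :
    (![X 0, X 1, - X 0 - X 1] : Fin 3 → MvPolynomial (Fin 2) ℚ) (τ 0) +
    (![X 0, X 1, - X 0 - X 1] : Fin 3 → MvPolynomial (Fin 2) ℚ) (τ 1) +
    (![X 0, X 1, - X 0 - X 1] : Fin 3 → MvPolynomial (Fin 2) ℚ) (τ 2) = 0 := by
  have h := Equiv.sum_comp τ (![X 0, X 1, - X 0 - X 1] : Fin 3 → MvPolynomial (Fin 2) ℚ)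
  rw [Fin.sum_univ_three, Fin.sum_univ_three] at h
  simp only [Matrix.cons_val_zero, Matrix.cons_val_one, Matrix.head_cons,
    Matrix.cons_val_two, Matrix.tail_cons] at h
  rw [h]; ring

/-- On even polynomials, `φ` is equivariant: `σ_*(φ(p)) = φ(σ.p)`. -/
theorem phi_equivariant_on_even :
    ∀ (σ : Equiv.Perm (Fin 3)), ∀ p ∈ evenSub 3, star3 σ (phi p) = phi (act3 σ p) := by
  intro σ p _
  have h : (phi.comp ((rename (⇑σ⁻¹)).comp
        ((rename (Fin.castSucc : Fin 2 → Fin 3)).comp phi)))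
      = phi.comp (rename (⇑σ⁻¹)) := by
    apply MvPolynomial.algHom_ext
    intro i
    fin_cases i <;>
      simp [phi, AlgHom.comp_apply, Fin.isValue] <;>
      linear_combination -sumw σ⁻¹
  have key : phi (rename (⇑σ⁻¹) (rename (Fin.castSucc : Fin 2 → Fin 3) (phi p)))
      = phi (rename (⇑σ⁻¹) p) := DFunLike.congr_fun h p
  unfold star3 act3
  rw [map_zsmul, map_zsmul, key]

end
end

section
/- Multiplication by x+y+z is equivariant for the signed S_3-action on ℚ[x,y,z] (i.e. σ.((x+y+z)p) = (x+y+z)(σ.p) for all σ and p), and the induced ℚ-linear map d_0: C_0 → C_1 on coinvariant spaces, C_0 = (ℚ[x,y,z]^odd)_{S_3} and C_1 = ℚ[x,y,z]_{S_3}, sending the class of p to the class of 2(x+y+z)p, is well defined and injective. In particular the cohomology of the complex (C, d_0) in degree 0 vanishes: H^0(C, d_0) = 0. -/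
open MvPolynomial

noncomputable section

/-- The subspace of odd polynomials. -/
def oddSub (n : ℕ) : Submodule ℚ (MvPolynomial (Fin n) ℚ) where
  carrier := {p | ∀ d ∈ p.support, Odd (d.sum fun _ e => e)}
  add_mem' := by
    intro p q hp hq d hd
    rcases Finset.mem_union.mp (support_add hd) with h | h
    · exact hp d h
    · exact hq d h
  zero_mem' := by simp
  smul_mem' := by
    intro c p hp d hd
    exact hp d (support_smul hd)

/-- Relations for the coinvariants of the odd polynomials:
`span{σ.v - v | σ ∈ S₃, v ∈ ℚ[x,y,z]^odd}`. -/
def Rodd3 : Submodule ℚ (MvPolynomial (Fin 3) ℚ) :=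
  Submodule.span ℚ {w | ∃ (σ : Equiv.Perm (Fin 3)) (v : MvPolynomial (Fin 3) ℚ),
    v ∈ oddSub 3 ∧ w = act3 σ v - v}

/-- Relations for the coinvariants of all polynomials:
`span{σ.v - v | σ ∈ S₃, v ∈ ℚ[x,y,z]}`. -/
def Rall3 : Submodule ℚ (MvPolynomial (Fin 3) ℚ) :=
  Submodule.span ℚ {w | ∃ (σ : Equiv.Perm (Fin 3)) (v : MvPolynomial (Fin 3) ℚ),
    w = act3 σ v - v}

/-- `act3 σ` as a linear map. -/
def actLin (σ : Equiv.Perm (Fin 3)) : MvPolynomial (Fin 3) ℚ →ₗ[ℚ] MvPolynomial (Fin 3) ℚ :=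
  ((Equiv.Perm.sign σ : ℤ) : ℚ) •
    (rename (⇑σ⁻¹) : MvPolynomial (Fin 3) ℚ →ₐ[ℚ] MvPolynomial (Fin 3) ℚ).toLinearMap

lemma act3_eq (σ : Equiv.Perm (Fin 3)) (p : MvPolynomial (Fin 3) ℚ) :
    act3 σ p = actLin σ p := by
  simp [act3, actLin, Int.cast_smul_eq_zsmul]

lemma rename_s (σ : Equiv.Perm (Fin 3)) :
    rename (⇑σ⁻¹) (X 0 + X 1 + X 2 : MvPolynomial (Fin 3) ℚ) = X 0 + X 1 + X 2 := by
  have h : (X 0 + X 1 + X 2 : MvPolynomial (Fin 3) ℚ) = ∑ i : Fin 3, X i := by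
    rw [Fin.sum_univ_three]
  rw [h, map_sum]
  simp only [rename_X]
  exact Equiv.sum_comp σ⁻¹ (fun i => X i)

lemma act3_mul_s (σ : Equiv.Perm (Fin 3)) (p : MvPolynomial (Fin 3) ℚ) :
    act3 σ ((X 0 + X 1 + X 2) * p) = (X 0 + X 1 + X 2) * act3 σ p := by
  unfold act3
  rw [map_mul, rename_s, mul_smul_comm]

lemma act3_act3 (σ τ : Equiv.Perm (Fin 3)) (p : MvPolynomial (Fin 3) ℚ) :
    act3 τ (act3 σ p) = act3 (σ * τ) p := by
  unfold act3
  rw [map_zsmul, smul_smul, rename_rename, mul_inv_rev, map_mul]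
  push_cast
  rw [mul_comm ((Equiv.Perm.sign τ : ℤ)) _]

/-- The (unnormalized) averaging operator. -/
def Eav : MvPolynomial (Fin 3) ℚ →ₗ[ℚ] MvPolynomial (Fin 3) ℚ :=
  ∑ σ : Equiv.Perm (Fin 3), actLin σ

lemma Eav_apply (p : MvPolynomial (Fin 3) ℚ) :
    Eav p = ∑ σ : Equiv.Perm (Fin 3), act3 σ p := by
  simp [Eav, LinearMap.sum_apply, act3_eq]

lemma Eav_act3 (σ : Equiv.Perm (Fin 3)) (p : MvPolynomial (Fin 3) ℚ) :
    Eav (act3 σ p) = Eav p := by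
  rw [Eav_apply, Eav_apply]
  have : ∀ τ : Equiv.Perm (Fin 3), act3 τ (act3 σ p) = act3 (σ * τ) p :=
    fun τ => act3_act3 σ τ p
  simp only [this]
  exact Equiv.sum_comp (Equiv.mulLeft σ) (fun τ => act3 τ p)

lemma Rall3_le_ker : Rall3 ≤ LinearMap.ker Eav := by
  rw [Rall3, Submodule.span_le]
  rintro w ⟨σ, v, rfl⟩
  simp [LinearMap.mem_ker, map_sub, Eav_act3]

lemma Eav_mul_s (p : MvPolynomial (Fin 3) ℚ) :
    Eav ((X 0 + X 1 + X 2) * p) = (X 0 + X 1 + X 2) * Eav p := by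
  rw [Eav_apply, Eav_apply, Finset.mul_sum]
  exact Finset.sum_congr rfl fun σ _ => act3_mul_s σ p

lemma mem_Rodd3_of_Eav_eq_zero {p : MvPolynomial (Fin 3) ℚ} (hp : p ∈ oddSub 3)
    (h : Eav p = 0) : p ∈ Rodd3 := by
  have hcard : (Fintype.card (Equiv.Perm (Fin 3)) : ℚ) = 6 := by
    norm_num [Fintype.card_perm, Nat.factorial]
  have key : p = (6 : ℚ)⁻¹ • ∑ σ : Equiv.Perm (Fin 3), (p - act3 σ p) := by
    rw [Finset.sum_sub_distrib, ← Eav_apply, h, sub_zero, Finset.sum_const,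
      Finset.card_univ]
    rw [← Nat.cast_smul_eq_nsmul ℚ, Fintype.card_perm]
    have h6 : (((Fintype.card (Fin 3)).factorial : ℕ) : ℚ) = 6 := by
      norm_num [Nat.factorial]
    rw [h6, smul_smul]
    norm_num
  rw [key]
  refine Submodule.smul_mem _ _ (Submodule.sum_mem _ fun σ _ => ?_)
  have : p - act3 σ p = (-1 : ℚ) • (act3 σ p - p) := by ring_nf; module
  rw [this]
  exact Submodule.smul_mem _ _ (Submodule.subset_span ⟨σ, p, hp, rfl⟩)

lemma s_ne_zero : (X 0 + X 1 + X 2 : MvPolynomial (Fin 3) ℚ) ≠ 0 := by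
  intro h
  have := congrArg (eval (fun _ => (1 : ℚ))) h
  norm_num at this

lemma mul_s_mem_Rall3 {r : MvPolynomial (Fin 3) ℚ} (hr : r ∈ Rall3) :
    (X 0 + X 1 + X 2) * r ∈ Rall3 := by
  induction hr using Submodule.span_induction with
  | mem w hw =>
    obtain ⟨σ, v, rfl⟩ := hw
    rw [mul_sub, ← act3_mul_s]
    exact Submodule.subset_span ⟨σ, (X 0 + X 1 + X 2) * v, rfl⟩
  | zero => simp
  | add x y _ _ hx hy => rw [mul_add]; exact Submodule.add_mem _ hx hy
  | smul c x _ hx => rw [mul_smul_comm]; exact Submodule.smul_mem _ _ hx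

/-- Multiplication by `x+y+z` is equivariant for the signed `S₃`-action, the induced
map `d₀ : C₀ = (ℚ[x,y,z]^odd)_{S₃} → C₁ = ℚ[x,y,z]_{S₃}`, `[p] ↦ [2(x+y+z)p]`, is
well defined and injective; in particular `H⁰(C,d₀) = 0`. -/
theorem d0_equivariant_wellDefined_injective :
    (∀ (σ : Equiv.Perm (Fin 3)) (p : MvPolynomial (Fin 3) ℚ),
      act3 σ ((X 0 + X 1 + X 2) * p) = (X 0 + X 1 + X 2) * act3 σ p) ∧
    (∀ r ∈ Rodd3, (2 : ℚ) • ((X 0 + X 1 + X 2) * r) ∈ Rall3) ∧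
    (∀ p ∈ oddSub 3, (2 : ℚ) • ((X 0 + X 1 + X 2) * p) ∈ Rall3 → p ∈ Rodd3) := by
  refine ⟨act3_mul_s, ?_, ?_⟩
  · intro r hr
    have hr' : r ∈ Rall3 := by
      refine Submodule.span_le.mpr ?_ hr
      rintro w ⟨σ, v, _, rfl⟩
      exact Submodule.subset_span ⟨σ, v, rfl⟩
    exact Submodule.smul_mem _ _ (mul_s_mem_Rall3 hr')
  · intro p hp h
    have h0 : Eav ((2 : ℚ) • ((X 0 + X 1 + X 2) * p)) = 0 := Rall3_le_ker h
    rw [map_smul, Eav_mul_s] at h0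
    have h1 : (X 0 + X 1 + X 2) * Eav p = 0 := by
      have h2 := congrArg (fun x => (2 : ℚ)⁻¹ • x) h0
      simpa [smul_smul] using h2
    have h2 : Eav p = 0 := by
      rcases mul_eq_zero.mp h1 with h | h
      · exact absurd h s_ne_zero
      · exact h
    exact mem_Rodd3_of_Eav_eq_zero hp h2

end
end

section
/- The coinvariant space (ℚ[x,y]^even)_{S_3} is spanned by the classes of the monomials x^{2i} y^{2j} with integers 1 ≤ i ≤ j; that is, every even polynomial in ℚ[x,y] is congruent, modulo the subspace R spanned by all σ_*v − v, to a ℚ-linear combination of monomials x^{2i} y^{2j} with 1 ≤ i ≤ j. -/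
open MvPolynomial

noncomputable section

/-- The relation subspace `R = span{σ_* v - v | σ ∈ S₃, v ∈ ℚ[x,y]^even}`. -/
def Rrel : Submodule ℚ (MvPolynomial (Fin 2) ℚ) :=
  Submodule.span ℚ {w | ∃ (σ : Equiv.Perm (Fin 3)) (v : MvPolynomial (Fin 2) ℚ),
    v ∈ evenSub 2 ∧ w = star3 σ v - v}

namespace ThetaAux

abbrev Sm : Submodule ℚ (MvPolynomial (Fin 2) ℚ) :=
  Rrel ⊔ Submodule.span ℚ
    {q : MvPolynomial (Fin 2) ℚ | ∃ i j : ℕ, 1 ≤ i ∧ i ≤ j ∧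
      q = (X 0) ^ (2 * i) * (X 1) ^ (2 * j)}

lemma sum_eq (d : Fin 2 →₀ ℕ) : (d.sum fun _ e => e) = d 0 + d 1 := by
  rw [Finsupp.sum_fintype _ _ (fun _ => rfl)]
  exact Fin.sum_univ_two _

lemma mono_even {a b : ℕ} (h : Even (a + b)) :
    (X 0 : MvPolynomial (Fin 2) ℚ) ^ a * X 1 ^ b ∈ evenSub 2 := by
  intro d hd
  rw [X_pow_eq_monomial, X_pow_eq_monomial, monomial_mul, one_mul, support_monomial,
    if_neg one_ne_zero] at hd
  simp only [Finset.mem_singleton] at hd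
  subst hd
  rw [sum_eq]
  simpa using h

lemma rel_mem (σ : Equiv.Perm (Fin 3)) {v} (hv : v ∈ evenSub 2) : star3 σ v - v ∈ Sm :=
  Submodule.mem_sup_left (Submodule.subset_span ⟨σ, v, hv, rfl⟩)

lemma star_swap01 (a b : ℕ) : star3 (Equiv.swap 0 1) ((X 0:MvPolynomial (Fin 2) ℚ)^a * X 1^b)
    = -((X 0)^b * (X 1)^a) := by
  simp [star3, act3, phi, Equiv.swap_inv, Equiv.Perm.sign_swap (by decide : (0:Fin 3) ≠ 1)]
  ring

lemma star_swap12 (a b : ℕ) : star3 (Equiv.swap 1 2) ((X 0:MvPolynomial (Fin 2) ℚ)^a * X 1^b)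
    = -((X 0)^a * (-X 0 - X 1)^b) := by
  have h0 : (Equiv.swap (1:Fin 3) 2) 0 = 0 := by decide
  have h1 : (Equiv.swap (1:Fin 3) 2) 1 = 2 := by decide
  simp [star3, act3, phi, Equiv.swap_inv, h0, h1,
    Equiv.Perm.sign_swap (by decide : (1:Fin 3) ≠ 2)]

lemma RA {a b : ℕ} (h : Even (a + b)) :
    (X 0 : MvPolynomial (Fin 2) ℚ)^a * X 1^b + X 0^b * X 1^a ∈ Sm := by
  have h1 := rel_mem (Equiv.swap 0 1) (mono_even h)
  rw [star_swap01] at h1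
  have h2 := Sm.neg_mem h1
  have h3 : (X 0 : MvPolynomial (Fin 2) ℚ)^a * X 1^b + X 0^b * X 1^a
      = -(-((X 0)^b * (X 1)^a) - X 0^a * X 1^b) := by ring
  rwa [h3]

lemma RB {c d : ℕ} (hc : Even c) (hd : Even d) :
    (X 0:MvPolynomial (Fin 2) ℚ)^c * (X 0 + X 1)^d + X 0^c * X 1^d ∈ Sm := by
  have h1 := rel_mem (Equiv.swap 1 2) (mono_even (hc.add hd))
  rw [star_swap12] at h1
  have h3 : (-X 0 - X 1 : MvPolynomial (Fin 2) ℚ)^d = (X 0 + X 1)^d := by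
    rw [show (-X 0 - X 1 : MvPolynomial (Fin 2) ℚ) = -(X 0 + X 1) by ring, hd.neg_pow]
  rw [h3] at h1
  have h2 := Sm.neg_mem h1
  have h4 : (X 0:MvPolynomial (Fin 2) ℚ)^c * (X 0 + X 1)^d + X 0^c * X 1^d
      = -(-(X 0^c * (X 0 + X 1)^d) - X 0^c * X 1^d) := by ring
  rwa [h4]

lemma smul_cancel {q : ℚ} (hq : q ≠ 0) {m : MvPolynomial (Fin 2) ℚ} (h : q • m ∈ Sm) :
    m ∈ Sm := by
  have := Sm.smul_mem q⁻¹ h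
  rwa [smul_smul, inv_mul_cancel₀ hq, one_smul] at this

lemma E0 {a : ℕ} (ha : Even a) : (X 0:MvPolynomial (Fin 2) ℚ)^a * X 1^(0:ℕ) ∈ Sm := by
  have h := RB ha (Even.zero)
  have h2 : (X 0:MvPolynomial (Fin 2) ℚ)^a * (X 0 + X 1)^(0:ℕ) + X 0^a * X 1^(0:ℕ)
      = (2:ℚ) • (X 0^a * X 1^(0:ℕ)) := by
    simp [two_smul]
  rw [h2] at h
  exact smul_cancel (by norm_num) h

lemma EE_le {a b : ℕ} (ha : Even a) (hb : Even b) (hab : a ≤ b) :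
    (X 0:MvPolynomial (Fin 2) ℚ)^a * X 1^b ∈ Sm := by
  rcases Nat.eq_zero_or_pos a with h0 | h0
  · subst h0
    rcases Nat.eq_zero_or_pos b with h1 | h1
    · subst h1; exact E0 Even.zero
    · have hs := RA (a := 0) (b := b) (by simpa using hb)
      have hb0 := E0 hb
      have : (X 0:MvPolynomial (Fin 2) ℚ)^(0:ℕ) * X 1^b
          = ((X 0)^(0:ℕ) * X 1^b + X 0^b * X 1^(0:ℕ)) - X 0^b * X 1^(0:ℕ) := by ring
      rw [this]
      exact Sm.sub_mem hs hb0
  · obtain ⟨i, hi⟩ := ha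
    obtain ⟨j, hj⟩ := hb
    refine Submodule.mem_sup_right (Submodule.subset_span ⟨i, j, by omega, by omega, ?_⟩)
    rw [show 2*i = a by omega, show 2*j = b by omega]

lemma EE (a b : ℕ) (ha : Even a) (hb : Even b) :
    (X 0:MvPolynomial (Fin 2) ℚ)^a * X 1^b ∈ Sm := by
  rcases le_or_gt a b with hab | hab
  · exact EE_le ha hb hab
  · have hs := RA (a := a) (b := b) (ha.add hb)
    have h1 := EE_le hb ha hab.le
    have : (X 0:MvPolynomial (Fin 2) ℚ)^a * X 1^b
        = ((X 0)^a * X 1^b + X 0^b * X 1^a) - X 0^b * X 1^a := by ring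
    rw [this]
    exact Sm.sub_mem hs h1

lemma odd_odd : ∀ b, Odd b → ∀ a, Odd a → (X 0:MvPolynomial (Fin 2) ℚ)^a * X 1^b ∈ Sm := by
  intro b
  induction b using Nat.strong_induction_on with
  | _ b IH =>
  intro hb a ha
  obtain ⟨c, hc⟩ : ∃ c, a = c + 1 := ⟨a - 1, by rcases ha with ⟨t, ht⟩; omega⟩
  set d := b + 1 with hdd
  have hce : Even c := by rcases ha with ⟨t, ht⟩; exact ⟨t, by omega⟩
  have hde : Even d := by rcases hb with ⟨t, ht⟩; exact ⟨t+1, by omega⟩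
  have hRB := RB hce hde
  have hMcd : (X 0:MvPolynomial (Fin 2) ℚ)^c * X 1^d ∈ Sm := EE c d hce hde
  have hT : (X 0:MvPolynomial (Fin 2) ℚ)^c * (X 0 + X 1)^d ∈ Sm := by
    have h := Sm.sub_mem hRB hMcd
    simpa using h
  have hexp : (X 0:MvPolynomial (Fin 2) ℚ)^c * (X 0 + X 1)^d
      = ∑ k ∈ Finset.range (d+1), ((d.choose k : ℚ)) • (X 0^(c+k) * X 1^(d-k)) := by
    rw [add_pow, Finset.mul_sum]
    refine Finset.sum_congr rfl fun k _ => ?_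
    rw [smul_eq_C_mul, map_natCast]
    ring
  have hterm1 : ((d.choose 1 : ℚ)) • ((X 0:MvPolynomial (Fin 2) ℚ)^(c+1) * X 1^(d-1))
      = (d:ℚ) • ((X 0)^a * X 1^b) := by
    rw [Nat.choose_one_right, show c+1 = a by omega, show d-1 = b by omega]
  have h1mem : (1:ℕ) ∈ Finset.range (d+1) := by
    simp [hdd]
  have hsplit := Finset.add_sum_erase (Finset.range (d+1))
    (fun k => ((d.choose k : ℚ)) • ((X 0:MvPolynomial (Fin 2) ℚ)^(c+k) * X 1^(d-k))) h1mem
  have hrest : ∑ k ∈ (Finset.range (d+1)).erase 1,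
      ((d.choose k : ℚ)) • ((X 0:MvPolynomial (Fin 2) ℚ)^(c+k) * X 1^(d-k)) ∈ Sm := by
    refine Submodule.sum_mem _ fun k hk => Submodule.smul_mem _ _ ?_
    have hk1 : k ≠ 1 := (Finset.mem_erase.mp hk).1
    have hkr : k ≤ d := by
      have := Finset.mem_range.mp (Finset.mem_erase.mp hk).2; omega
    rcases Nat.even_or_odd k with hke | hko
    · refine EE _ _ (hce.add hke) ?_
      rw [Nat.even_sub hkr]
      exact iff_of_true hde hke
    · have h3 : 3 ≤ k := by rcases hko with ⟨t, ht⟩; omega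
      have hlt : d - k < b := by omega
      have hod : Odd (d - k) := Nat.Even.sub_odd hkr hde hko
      exact IH _ hlt hod _ (hce.add_odd hko)
  have hdM : (d:ℚ) • ((X 0:MvPolynomial (Fin 2) ℚ)^a * X 1^b) ∈ Sm := by
    have heq : (d:ℚ) • ((X 0:MvPolynomial (Fin 2) ℚ)^a * X 1^b)
        = (X 0^c * (X 0 + X 1)^d) - ∑ k ∈ (Finset.range (d+1)).erase 1,
          ((d.choose k : ℚ)) • (X 0^(c+k) * X 1^(d-k)) := by
      rw [hexp, ← hsplit]
      beta_reduce
      rw [hterm1]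
      ring
    rw [heq]
    exact Sm.sub_mem hT hrest
  exact smul_cancel (by exact_mod_cast (by omega : (d:ℕ) ≠ 0)) hdM

end ThetaAux

/-- The coinvariant space `(ℚ[x,y]^even)_{S₃}` is spanned by the classes of the
monomials `x^{2i} y^{2j}` with `1 ≤ i ≤ j`: every even polynomial is congruent
modulo `R` to a linear combination of such monomials. -/
theorem coinvariants_spanned_by_theta_monomials :
    ∀ p ∈ evenSub 2,
      p ∈ Rrel ⊔ Submodule.span ℚ
        {q : MvPolynomial (Fin 2) ℚ | ∃ i j : ℕ, 1 ≤ i ∧ i ≤ j ∧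
          q = (X 0) ^ (2 * i) * (X 1) ^ (2 * j)} := by
  intro p hp
  rw [p.as_sum]
  refine Submodule.sum_mem _ fun d hd => ?_
  have hpar := hp d hd
  rw [ThetaAux.sum_eq] at hpar
  have hmono : (monomial d (coeff d p) : MvPolynomial (Fin 2) ℚ)
      = (coeff d p) • ((X 0:MvPolynomial (Fin 2) ℚ)^(d 0) * X 1^(d 1)) := by
    rw [monomial_eq, smul_eq_C_mul]
    congr 1
    rw [Finsupp.prod_fintype _ _ (fun _ => pow_zero _)]
    exact Fin.prod_univ_two _
  rw [hmono]
  refine Submodule.smul_mem _ _ ?_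
  rcases Nat.even_or_odd (d 0) with h0 | h0
  · have h1 : Even (d 1) := by
      rcases Nat.even_or_odd (d 1) with h | h
      · exact h
      · exfalso; exact (Nat.not_even_iff_odd.mpr (h0.add_odd h)) hpar
    exact ThetaAux.EE _ _ h0 h1
  · have h1 : Odd (d 1) := by
      rcases Nat.even_or_odd (d 1) with h | h
      · exfalso; exact (Nat.not_even_iff_odd.mpr (h0.add_even h)) hpar
      · exact h
    exact ThetaAux.odd_odd _ h1 _ h0


end
end

section
/- In ℚ[x,y], the polynomial x^2 y^8 − 3 x^4 y^6 lies in the subspace R spanned by all σ_*v − v (σ ∈ S_3, v ∈ ℚ[x,y]^even); equivalently, in the coinvariant space (ℚ[x,y]^even)_{S_3} one has the relation [x^2 y^8] = 3·[x^4 y^6]. (This corresponds to the depth-two relation {σ_3, σ_9} = 3{σ_5, σ_7} modulo depth three in the Grothendieck–Teichmüller Lie algebra.) -/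
open MvPolynomial

noncomputable section

lemma mon_mem (a b : ℕ) (h : Even (a+b)) :
    ((X 0)^a * (X 1)^b : MvPolynomial (Fin 2) ℚ) ∈ evenSub 2 := by
  intro d hd
  rw [X_pow_eq_monomial, X_pow_eq_monomial, monomial_mul, one_mul] at hd
  have := support_monomial_subset hd
  simp only [Finset.mem_singleton] at this
  subst this
  rw [Finsupp.sum_add_index (by simp) (by simp)]
  simpa using h

lemma star3_swap12 (a b : ℕ) :
    star3 (Equiv.swap 1 2) ((X 0)^a * (X 1)^b : MvPolynomial (Fin 2) ℚ)
      = -((X 0)^a * (-X 0 - X 1)^b) := by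
  simp [star3, act3, phi, Equiv.Perm.sign_swap (by decide : (1:Fin 3) ≠ 2),
    map_mul, map_pow, rename_X, Equiv.swap_apply_def, Fin.castSucc,
    show ((Fin.castAdd 1 0 : Fin 3)) = 0 from rfl, show ((Fin.castAdd 1 1 : Fin 3)) = 1 from rfl]

lemma star3_swap01 (a b : ℕ) :
    star3 (Equiv.swap 0 1) ((X 0)^a * (X 1)^b : MvPolynomial (Fin 2) ℚ)
      = -((X 1)^a * (X 0)^b) := by
  simp [star3, act3, phi, Equiv.Perm.sign_swap (by decide : (0:Fin 3) ≠ 1),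
    map_mul, map_pow, rename_X, Equiv.swap_apply_def, Fin.castSucc,
    show ((Fin.castAdd 1 0 : Fin 3)) = 0 from rfl, show ((Fin.castAdd 1 1 : Fin 3)) = 1 from rfl]

lemma star3_sub (σ : Equiv.Perm (Fin 3)) (p q : MvPolynomial (Fin 2) ℚ) :
    star3 σ (p - q) = star3 σ p - star3 σ q := by
  simp [star3, act3, map_sub, smul_sub]

lemma star3_neg (σ : Equiv.Perm (Fin 3)) (p : MvPolynomial (Fin 2) ℚ) :
    star3 σ (-p) = -star3 σ p := by
  simp [star3, act3, map_neg]

lemma star3_smul (σ : Equiv.Perm (Fin 3)) (c : ℚ) (p : MvPolynomial (Fin 2) ℚ) :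
    star3 σ (c • p) = c • star3 σ p := by
  simp [star3, act3, map_smul, smul_comm ((Equiv.Perm.sign σ : ℤ)) c]

/-- v₁ : the even polynomial used with the swap (y z). -/
def v1 : MvPolynomial (Fin 2) ℚ :=
  (X 0)^0 * (X 1)^10 - (490:ℚ) • ((X 0)^1 * (X 1)^9) - (2205:ℚ) • ((X 0)^2 * (X 1)^8)
    - (3732:ℚ) • ((X 0)^3 * (X 1)^7) - (2814:ℚ) • ((X 0)^4 * (X 1)^6)
    - (798:ℚ) • ((X 0)^5 * (X 1)^5)

/-- v₂ : the even polynomial used with the swap (x y). -/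
def v2 : MvPolynomial (Fin 2) ℚ :=
  -((2:ℚ) • ((X 0)^0 * (X 1)^10)) - (10:ℚ) • ((X 0)^1 * (X 1)^9)
    - (87:ℚ) • ((X 0)^2 * (X 1)^8) - (120:ℚ) • ((X 0)^3 * (X 1)^7)

lemma v1_mem : v1 ∈ evenSub 2 := by
  refine Submodule.sub_mem _ (Submodule.sub_mem _ (Submodule.sub_mem _ (Submodule.sub_mem _
    (Submodule.sub_mem _ (mon_mem 0 10 (by decide))
      (Submodule.smul_mem _ _ (mon_mem 1 9 (by decide))))
    (Submodule.smul_mem _ _ (mon_mem 2 8 (by decide))))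
    (Submodule.smul_mem _ _ (mon_mem 3 7 (by decide))))
    (Submodule.smul_mem _ _ (mon_mem 4 6 (by decide))))
    (Submodule.smul_mem _ _ (mon_mem 5 5 (by decide)))

lemma v2_mem : v2 ∈ evenSub 2 := by
  refine Submodule.sub_mem _ (Submodule.sub_mem _ (Submodule.sub_mem _
    (Submodule.neg_mem _ (Submodule.smul_mem _ _ (mon_mem 0 10 (by decide))))
    (Submodule.smul_mem _ _ (mon_mem 1 9 (by decide))))
    (Submodule.smul_mem _ _ (mon_mem 2 8 (by decide))))
    (Submodule.smul_mem _ _ (mon_mem 3 7 (by decide)))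

/-- In `(ℚ[x,y]^even)_{S₃}` one has `[x²y⁸] = 3[x⁴y⁶]`, corresponding to the relation `{σ₃,σ₉} = 3{σ₅,σ₇}` modulo depth three. -/
theorem relation_weight12 :
    ((X 0) ^ 2 * (X 1) ^ 8 - 3 * ((X 0) ^ 4 * (X 1) ^ 6) : MvPolynomial (Fin 2) ℚ) ∈ Rrel := by
  have m1 : star3 (Equiv.swap 1 2) v1 - v1 ∈ Rrel :=
    Submodule.subset_span ⟨Equiv.swap 1 2, v1, v1_mem, rfl⟩
  have m2 : star3 (Equiv.swap 0 1) v2 - v2 ∈ Rrel :=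
    Submodule.subset_span ⟨Equiv.swap 0 1, v2, v2_mem, rfl⟩
  have key : (42:ℚ) • ((X 0) ^ 2 * (X 1) ^ 8 - 3 * ((X 0) ^ 4 * (X 1) ^ 6)
        : MvPolynomial (Fin 2) ℚ)
      = (star3 (Equiv.swap 1 2) v1 - v1) + (star3 (Equiv.swap 0 1) v2 - v2) := by
    simp only [v1, v2, star3_sub, star3_neg, star3_smul, star3_swap12, star3_swap01]
    simp only [smul_eq_C_mul, map_ofNat]
    ring
  have h42 : ((X 0) ^ 2 * (X 1) ^ 8 - 3 * ((X 0) ^ 4 * (X 1) ^ 6) : MvPolynomial (Fin 2) ℚ)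
      = ((1:ℚ)/42) • ((42:ℚ) • ((X 0) ^ 2 * (X 1) ^ 8 - 3 * ((X 0) ^ 4 * (X 1) ^ 6)
        : MvPolynomial (Fin 2) ℚ)) := by
    rw [smul_smul]; norm_num
  rw [h42, key]
  exact Submodule.smul_mem _ _ (Submodule.add_mem _ m1 m2)

end
end
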